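/- Let G be a graph and (T,χ) a lenient tree decomposition of G. Then the (T,χ)-completion G⁺ of G is a chordal graph. -/

import Mathlib

open SimpleGraph

section Defs

variable {V W : Type}

/-- `X` covers the family `B`: every member of `B` meets `X`. -/
def Covers (X : Set V) (B : Set (Set V)) : Prop := ∀ S ∈ B, (S ∩ X).Nonempty

/-- A strict bramble: a family of connected vertex sets, pairwise intersecting. -/
def IsStrictBramble (G : SimpleGraph V) (B : Set (Set V)) : Prop :=
  (∀ S ∈ B, (G.induce S).Connected) ∧ ∀ S ∈ B, ∀ S' ∈ B, (S ∩ S').Nonempty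

/-- Two vertex sets touch: they intersect or are joined by an edge. -/
def Touches (G : SimpleGraph V) (S S' : Set V) : Prop :=
  (S ∩ S').Nonempty ∨ ∃ u ∈ S, ∃ v ∈ S', G.Adj u v

/-- A bramble: a family of connected vertex sets, pairwise touching. -/
def IsBramble (G : SimpleGraph V) (B : Set (Set V)) : Prop :=
  (∀ S ∈ B, (G.induce S).Connected) ∧ ∀ S ∈ B, ∀ S' ∈ B, Touches G S S'

/-- The order of a family of vertex sets: minimum size of a covering set. -/
noncomputable def brOrder (B : Set (Set V)) : ℕ :=
  sInf {n | ∃ X : Set V, Covers X B ∧ X.ncard = n}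

/-- The strict bramble number. -/
noncomputable def sbn (G : SimpleGraph V) : ℕ :=
  sSup {n | ∃ B, IsStrictBramble G B ∧ brOrder B = n}

/-- The bramble number. -/
noncomputable def bn (G : SimpleGraph V) : ℕ :=
  sSup {n | ∃ B, IsBramble G B ∧ brOrder B = n}

/-- `S` is an `(x,y)`-separator: `x, y ∉ S` and `x, y` lie in different
components of `G − S`. -/
def SepPair (G : SimpleGraph V) (x y : V) (S : Set V) : Prop :=
  x ∉ S ∧ y ∉ S ∧ ∀ (hx : x ∈ Sᶜ) (hy : y ∈ Sᶜ),
    ¬ (G.induce Sᶜ).Reachable ⟨x, hx⟩ ⟨y, hy⟩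

/-- `S` is an `(X,Y)`-separator of `G`. -/
def IsSetSeparator (G : SimpleGraph V) (X Y S : Set V) : Prop :=
  ∀ x ∈ X \ S, ∀ y ∈ Y \ S, SepPair G x y S

/-- A lenient tree decomposition of `G`. -/
structure LenientTD (G : SimpleGraph V) where
  ι : Type
  T : SimpleGraph ι
  tree : T.IsTree
  χ : ι → Set V
  covers : ∀ v : V, ∃ t, v ∈ χ t
  edge_mem : ∀ u v : V, G.Adj u v →
    ∃ t t', (t = t' ∨ T.Adj t t') ∧ u ∈ χ t ∪ χ t' ∧ v ∈ χ t ∪ χ t'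
  trace_conn : ∀ v : V, (T.induce {t | v ∈ χ t}).Connected

/-- The width of a lenient tree decomposition is at most `k`. -/
def LenientTD.WidthLE {G : SimpleGraph V} (D : LenientTD G) (k : ℕ) : Prop :=
  ∀ t, (D.χ t).ncard ≤ k

/-- An ordinary tree decomposition of `G`. -/
structure TreeDecomp (G : SimpleGraph V) where
  ι : Type
  T : SimpleGraph ι
  tree : T.IsTree
  χ : ι → Set V
  covers : ∀ v : V, ∃ t, v ∈ χ t
  edge_mem : ∀ u v : V, G.Adj u v → ∃ t, u ∈ χ t ∧ v ∈ χ t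
  trace_conn : ∀ v : V, (T.induce {t | v ∈ χ t}).Connected

/-- Treewidth: minimum over tree decompositions of (max bag size − 1). -/
noncomputable def tw (G : SimpleGraph V) : ℕ :=
  sInf {k | ∃ D : TreeDecomp G, ∀ t, (D.χ t).ncard ≤ k + 1}

/-- A minor model of `H` in `G`. -/
def IsMinorModel (H : SimpleGraph W) (G : SimpleGraph V) (μ : W → Set V) : Prop :=
  (∀ w, (G.induce (μ w)).Connected) ∧
  (∀ w w', w ≠ w' → μ w ∩ μ w' = ∅) ∧
  (∀ w w', H.Adj w w' → ∃ u ∈ μ w, ∃ v ∈ μ w', G.Adj u v)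

/-- `H` is a minor of `G`. -/
def IsMinorOf (H : SimpleGraph W) (G : SimpleGraph V) : Prop :=
  ∃ μ : W → Set V, IsMinorModel H G μ

/-- The lexicographic product `T · K_k`. -/
def lexK {ι : Type} (T : SimpleGraph ι) (k : ℕ) : SimpleGraph (ι × Fin k) where
  Adj a b := T.Adj a.1 b.1 ∨ (a.1 = b.1 ∧ a.2 ≠ b.2)
  symm := by
    constructor
    rintro a b (h | ⟨h1, h2⟩)
    · exact Or.inl h.symm
    · exact Or.inr ⟨h1.symm, h2.symm⟩
  loopless := by
    constructor
    rintro a (h | ⟨_, h2⟩)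
    · exact T.irrefl h
    · exact h2 rfl

/-- The lexicographic tree product number. -/
noncomputable def ltp (G : SimpleGraph V) : ℕ :=
  sInf {m | ∃ (ι : Type) (T : SimpleGraph ι), T.IsTree ∧ IsMinorOf G (lexK T m)}

/-- The `(T,χ)`-completion of `G`: make each union of two close bags a clique. -/
def LenientTD.completion {G : SimpleGraph V} (D : LenientTD G) : SimpleGraph V where
  Adj u v := u ≠ v ∧ ∃ t t', (t = t' ∨ D.T.Adj t t') ∧
    u ∈ D.χ t ∪ D.χ t' ∧ v ∈ D.χ t ∪ D.χ t'
  symm := by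
    constructor
    rintro u v ⟨hne, t, t', hc, hu, hv⟩
    exact ⟨hne.symm, t, t', hc, hv, hu⟩
  loopless := ⟨fun u h => h.1 rfl⟩

/-- `G` is chordal: every cycle of length at least four has a chord. -/
def IsChordal (G : SimpleGraph V) : Prop :=
  ∀ (v : V) (w : G.Walk v v), w.IsCycle → 4 ≤ w.length →
    ∃ x ∈ w.support, ∃ y ∈ w.support, G.Adj x y ∧ s(x, y) ∉ w.edges

end Defs

/-! Root the tree at `r` and let `top u` be the bag containing `u` that is closest to `r`; by (C3)
every bag containing `u` lies below `top u`. On a cycle of `G⁺`, pick `x` whose top bag `a` is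
deepest. Any `G⁺`-neighbour of `x` whose top bag is not deeper than `a` must meet `χ a` or the bag
of the parent of `a`, and these two bags are close. Hence the two cycle-neighbours of `x` are
adjacent, which is a chord once the cycle has length at least four. -/

namespace SimpleGraph

variable {V : Type*} {G : SimpleGraph V}

lemma Preconnected.exists_walk_of_induce {s : Set V} (h : (G.induce s).Preconnected)
    {u v : V} (hu : u ∈ s) (hv : v ∈ s) : ∃ W : G.Walk u v, ∀ x ∈ W.support, x ∈ s := by
  obtain ⟨W⟩ := h ⟨u, hu⟩ ⟨v, hv⟩
  refine ⟨W.map (Embedding.induce s).toHom, fun x hx => ?_⟩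
  have hx' : x ∈ W.support.map (Embedding.induce (G := G) s).toHom := by rwa [← Walk.support_map]
  obtain ⟨y, -, rfl⟩ := List.mem_map.mp hx'
  exact y.2

lemma Walk.IsCycle.mk_snd_penultimate_notMem_edges {u : V} {p : G.Walk u u}
    (hp : p.IsCycle) (hlen : 4 ≤ p.length) : s(p.snd, p.penultimate) ∉ p.edges := by
  have hedges : p.edges = s(u, p.snd) :: p.tail.edges := by
    rw [← edges_cons (p.adj_snd hp.not_nil), p.cons_tail_eq hp.not_nil]
  rw [hedges, List.mem_cons, Sym2.eq_iff]
  rintro ((⟨h, -⟩ | ⟨-, h⟩) | h)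
  · exact (p.adj_snd hp.not_nil).ne h.symm
  · exact (p.adj_penultimate hp.not_nil).ne h
  · have h2 : p.penultimate = p.getVert 2 := by
      rw [hp.isPath_tail.eq_snd_of_mem_edges h, snd, getVert_tail]
    have := hp.getVert_injOn (by simp; omega) (by simp; omega) h2
    omega

end SimpleGraph

theorem isChordal_of_forall_exists_simplicial {V : Type} {G : SimpleGraph V}
    (h : ∀ S : Finset V, S.Nonempty → ∃ x ∈ S, ∀ y ∈ S, ∀ z ∈ S,
      G.Adj x y → G.Adj x z → y ≠ z → G.Adj y z) :
    IsChordal G := by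
  classical
  intro v w hw hlen
  obtain ⟨x, hx, hsimp⟩ := h w.support.toFinset ⟨v, by simp⟩
  have hxw : x ∈ w.support := List.mem_toFinset.mp hx
  set c := w.rotate x hxw
  have hc : c.IsCycle := hw.rotate hxw
  have hmem (i : ℕ) : c.getVert i ∈ w.support :=
    (w.mem_support_rotate_iff x hxw).mp (c.getVert_mem_support i)
  refine ⟨c.snd, hmem 1, c.penultimate, hmem _, ?_, fun he => ?_⟩
  · exact hsimp _ (List.mem_toFinset.mpr (hmem 1)) _ (List.mem_toFinset.mpr (hmem _))
      (c.adj_snd hc.not_nil) (c.adj_penultimate hc.not_nil).symm hc.snd_ne_penultimate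
  · exact hc.mk_snd_penultimate_notMem_edges (by simpa [c] using hlen)
      ((w.rotate_edges x hxw).mem_iff.mpr he)

namespace SimpleGraph.IsTree

variable {ι : Type*} {T : SimpleGraph ι} (hT : T.IsTree) (r : ι)

noncomputable def rootPath (c : ι) : T.Walk r c := (hT.existsUnique_path r c).exists.choose

lemma isPath_rootPath (c : ι) : (hT.rootPath r c).IsPath :=
  (hT.existsUnique_path r c).exists.choose_spec

lemma length_rootPath (c : ι) : (hT.rootPath r c).length = T.dist r c := by
  obtain ⟨p, hp, hlen⟩ := (hT.connected r c).exists_path_of_dist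
  rw [← hlen, (hT.existsUnique_path r c).unique (hT.isPath_rootPath r c) hp]

def IsAncestor (a c : ι) : Prop := a ∈ (hT.rootPath r c).support

def IsParent (p a : ι) : Prop := T.Adj p a ∧ hT.IsAncestor r p a

variable {hT r}

lemma isAncestor_self (c : ι) : hT.IsAncestor r c c := (hT.rootPath r c).end_mem_support

lemma IsAncestor.dist_lt {a c : ι} (h : hT.IsAncestor r a c) (hne : a ≠ c) :
    T.dist r a < T.dist r c := by
  classical
  calc T.dist r a ≤ ((hT.rootPath r c).takeUntil a h).length := dist_le _
    _ < (hT.rootPath r c).length := Walk.length_takeUntil_lt_length h hne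
    _ = T.dist r c := hT.length_rootPath r c

lemma IsAncestor.eq_of_dist_le {a c : ι} (h : hT.IsAncestor r a c)
    (hd : T.dist r c ≤ T.dist r a) : a = c := by
  by_contra hne
  exact (h.dist_lt hne).not_ge hd

lemma IsParent.dist_lt {p a : ι} (h : hT.IsParent r p a) : T.dist r p < T.dist r a :=
  h.2.dist_lt h.1.ne

lemma IsParent.unique {p q a : ι} (hp : hT.IsParent r p a) (hq : hT.IsParent r q a) : p = q :=
  (hT.isAcyclic.eq_penultimate_of_adj_end (hT.isPath_rootPath r a) hp.1.symm hp.2).trans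
    (hT.isAcyclic.eq_penultimate_of_adj_end (hT.isPath_rootPath r a) hq.1.symm hq.2).symm

lemma IsAncestor.of_adj {a c c' : ι} (h : hT.IsAncestor r a c) (hadj : T.Adj c c') :
    hT.IsAncestor r a c' ∨ (c = a ∧ hT.IsParent r c' a) := by
  classical
  have hc := hT.isPath_rootPath r c
  have hc' := hT.isPath_rootPath r c'
  by_cases hmem : c ∈ (hT.rootPath r c').support
  · left
    rw [IsAncestor, hT.isAcyclic.path_concat hc hc' hadj hmem]
    exact (hT.rootPath r c).support_subset_support_concat hadj h
  · have hmem' := hT.isAcyclic.mem_support_of_ne_mem_support_of_adj_of_isPath hc hc' hadj hmem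
    rw [IsAncestor, hT.isAcyclic.path_concat hc' hc hadj.symm hmem', Walk.support_concat,
      List.mem_append, List.mem_singleton] at h
    rcases h with h | rfl
    · exact Or.inl h
    · exact Or.inr ⟨rfl, hadj.symm, hmem'⟩

lemma IsAncestor.of_walk {a c e : ι} (h : hT.IsAncestor r a c) (W : T.Walk c e)
    (hW : ∀ p, hT.IsParent r p a → s(a, p) ∉ W.edges) : hT.IsAncestor r a e := by
  induction W with
  | nil => exact h
  | cons hadj W ih =>
    rcases h.of_adj hadj with h' | ⟨rfl, hp⟩
    · exact ih h' fun p hp he => hW p hp (by simp [he])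
    · exact absurd (by simp) (hW _ hp)

end SimpleGraph.IsTree

namespace LenientTD

variable {V : Type} {G : SimpleGraph V} (D : LenientTD G) (r : D.ι)

lemma completion_adj_iff {u v : V} :
    D.completion.Adj u v ↔
      u ≠ v ∧ ∃ s s', (s = s' ∨ D.T.Adj s s') ∧ u ∈ D.χ s ∧ v ∈ D.χ s' := by
  refine ⟨fun ⟨hne, t, t', hc, hu, hv⟩ => ⟨hne, ?_⟩,
    fun ⟨hne, s, s', hc, hu, hv⟩ => ⟨hne, s, s', hc, Or.inl hu, Or.inr hv⟩⟩
  rcases hu with hu | hu <;> rcases hv with hv | hv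
  · exact ⟨t, t, Or.inl rfl, hu, hv⟩
  · exact ⟨t, t', hc, hu, hv⟩
  · exact ⟨t', t, hc.imp Eq.symm (D.T.adj_symm ·), hu, hv⟩
  · exact ⟨t', t', Or.inl rfl, hu, hv⟩

lemma exists_walk_of_mem {u : V} {s t : D.ι} (hs : u ∈ D.χ s) (ht : u ∈ D.χ t) :
    ∃ W : D.T.Walk s t, ∀ c ∈ W.support, u ∈ D.χ c :=
  (D.trace_conn u).preconnected.exists_walk_of_induce hs ht

noncomputable def top (u : V) : D.ι :=
  Function.argminOn (D.T.dist r) {t | u ∈ D.χ t} (D.covers u)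

variable {D r}

lemma mem_χ_top (u : V) : u ∈ D.χ (D.top r u) :=
  Function.argminOn_mem _ {t | u ∈ D.χ t} _

lemma dist_top_le {u : V} {t : D.ι} (h : u ∈ D.χ t) : D.T.dist r (D.top r u) ≤ D.T.dist r t :=
  Function.argminOn_le _ {t | u ∈ D.χ t} h

lemma isAncestor_top {u : V} {t : D.ι} (h : u ∈ D.χ t) : D.tree.IsAncestor r (D.top r u) t := by
  obtain ⟨W, hW⟩ := D.exists_walk_of_mem (mem_χ_top u) h
  refine (SimpleGraph.IsTree.isAncestor_self _).of_walk W fun p hp he => ?_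
  have := dist_top_le (r := r) (hW p (W.snd_mem_support_of_mem_edges he))
  exact (hp.dist_lt.trans_le this).false

lemma mem_χ_of_isAncestor {u : V} {a c : D.ι} (hac : D.tree.IsAncestor r a c) (hu : u ∈ D.χ c)
    (hd : D.T.dist r (D.top r u) ≤ D.T.dist r a) : u ∈ D.χ a := by
  obtain ⟨W, hW⟩ := D.exists_walk_of_mem hu (mem_χ_top u)
  by_cases ha : a ∈ W.support
  · exact hW a ha
  · have := hac.of_walk W fun p _ he => ha (W.fst_mem_support_of_mem_edges he)
    exact this.eq_of_dist_le hd ▸ mem_χ_top u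

lemma mem_χ_top_or_parent {x u : V} (hadj : D.completion.Adj x u)
    (hd : D.T.dist r (D.top r u) ≤ D.T.dist r (D.top r x)) :
    u ∈ D.χ (D.top r x) ∨ ∃ p, D.tree.IsParent r p (D.top r x) ∧ u ∈ D.χ p := by
  obtain ⟨-, s, s', hss, hxs, hus'⟩ := D.completion_adj_iff.mp hadj
  have has := isAncestor_top (r := r) hxs
  rcases hss with rfl | hadj'
  · exact Or.inl (mem_χ_of_isAncestor has hus' hd)
  · rcases has.of_adj hadj' with has' | ⟨-, hp⟩
    · exact Or.inl (mem_χ_of_isAncestor has' hus' hd)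
    · exact Or.inr ⟨s', hp, hus'⟩

lemma completion_adj_of_dist_top_le {x y z : V} (hy : D.completion.Adj x y)
    (hz : D.completion.Adj x z) (hyz : y ≠ z)
    (hdy : D.T.dist r (D.top r y) ≤ D.T.dist r (D.top r x))
    (hdz : D.T.dist r (D.top r z) ≤ D.T.dist r (D.top r x)) : D.completion.Adj y z := by
  refine D.completion_adj_iff.mpr ⟨hyz, ?_⟩
  rcases mem_χ_top_or_parent hy hdy with hy' | ⟨p, hp, hy'⟩ <;>
    rcases mem_χ_top_or_parent hz hdz with hz' | ⟨q, hq, hz'⟩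
  · exact ⟨_, _, Or.inl rfl, hy', hz'⟩
  · exact ⟨_, _, Or.inr hq.1.symm, hy', hz'⟩
  · exact ⟨_, _, Or.inr hp.1, hy', hz'⟩
  · exact ⟨_, _, Or.inl (hp.unique hq), hy', hz'⟩

end LenientTD

theorem completion_isChordal_general {V : Type} (G : SimpleGraph V)
    (D : LenientTD G) : IsChordal D.completion := by
  obtain ⟨r⟩ := D.tree.connected.nonempty
  refine isChordal_of_forall_exists_simplicial fun S hS => ?_
  obtain ⟨x, hx, hmax⟩ := S.exists_max_image (fun u => D.T.dist r (D.top r u)) hS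
  exact ⟨x, hx, fun y hy z hz hxy hxz hyz =>
    LenientTD.completion_adj_of_dist_top_le hxy hxz hyz (hmax y hy) (hmax z hz)⟩

/-- the `(T,χ)`-completion of `G` is chordal. -/
theorem completion_isChordal {V : Type} [Fintype V] (G : SimpleGraph V)
    (D : LenientTD G) : IsChordal D.completion :=
  completion_isChordal_general G D
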